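/- arXiv:1107.5283 — 2 statements merged into one kernel-verified Lean document; each statement's English description precedes it below -/
import Mathlib

section
/- For every rotation matrix R in SO(3), the square of the Frobenius norm of R − I₃ equals √2 times the Frobenius norm of R + Rᵀ − 2I₃; that is, |||R − I₃|||² = √2 · |||R + Rᵀ − 2I₃|||. -/
/-!
For orthogonal `R` both sides are traces: `|||R - 1|||² = tr ((R - 1)ᵀ (R - 1)) = 6 - 2 tr R`, and
`S = R + Rᵀ - 2` is symmetric with `|||S|||² = tr (S²) = 2 tr (R²) - 8 tr R + 18`. In dimension 3,
`tr (R²) = (tr R)² - 2 tr (adj R)`, and `adj R = Rᵀ` when `det R = 1`, so `tr (R²) = (tr R)² - 2 tr R`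
and `|||S|||² = 2 (3 - tr R)² = |||R - 1|||⁴ / 2`.
-/

open Matrix

noncomputable def frobSq (A : Matrix (Fin 3) (Fin 3) ℝ) : ℝ := ∑ i, ∑ j, (A i j)^2
noncomputable def frob (A : Matrix (Fin 3) (Fin 3) ℝ) : ℝ := Real.sqrt (frobSq A)
def IsSO (R : Matrix (Fin 3) (Fin 3) ℝ) : Prop := Rᵀ * R = 1 ∧ R.det = 1

lemma frobSq_nonneg (A : Matrix (Fin 3) (Fin 3) ℝ) : 0 ≤ frobSq A := by
  unfold frobSq
  positivity

lemma frobSq_eq_trace_transpose_mul (A : Matrix (Fin 3) (Fin 3) ℝ) :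
    frobSq A = trace (Aᵀ * A) := by
  simp only [frobSq, trace, diag, mul_apply, transpose_apply, sq]
  exact Finset.sum_comm

lemma trace_mul_self_fin_three {R : Type*} [CommRing R] (A : Matrix (Fin 3) (Fin 3) R) :
    trace (A * A) = trace A ^ 2 - 2 * trace (adjugate A) := by
  simp only [trace_fin_three, mul_apply, Fin.sum_univ_three, adjugate_fin_three, of_apply,
    cons_val', cons_val_zero, cons_val_fin_one, cons_val_one, cons_val]
  ring

section Orthogonal

variable {n R : Type*} [Fintype n] [DecidableEq n] [CommRing R] {Q : Matrix n n R}

lemma adjugate_eq_transpose_of_det_eq_one (hQ : Q * Qᵀ = 1) (hdet : Q.det = 1) :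
    adjugate Q = Qᵀ := by
  calc adjugate Q = adjugate Q * (Q * Qᵀ) := by rw [hQ, mul_one]
    _ = Qᵀ := by rw [← mul_assoc, adjugate_mul, hdet, one_smul, one_mul]

lemma trace_transpose_mul_sub_one (hQ : Qᵀ * Q = 1) :
    trace ((Q - 1)ᵀ * (Q - 1)) = 2 * Fintype.card n - 2 * trace Q := by
  have hexpand : (Q - 1)ᵀ * (Q - 1) = (2 : R) • 1 - Qᵀ - Q := by
    rw [transpose_sub, transpose_one, sub_mul, mul_sub, mul_sub, hQ, mul_one, one_mul, one_mul]
    module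
  rw [hexpand, trace_sub, trace_sub, trace_transpose, trace_smul, trace_one, smul_eq_mul]
  ring

lemma trace_mul_self_add_transpose_sub_two (hQ : Qᵀ * Q = 1) (hQ' : Q * Qᵀ = 1) :
    trace ((Q + Qᵀ - (2 : R) • 1) * (Q + Qᵀ - (2 : R) • 1)) =
      2 * trace (Q * Q) - 8 * trace Q + 6 * Fintype.card n := by
  have hexpand : (Q + Qᵀ - (2 : R) • 1) * (Q + Qᵀ - (2 : R) • 1) =
      Q * Q + (Q * Q)ᵀ - (4 : R) • (Q + Qᵀ) + (6 : R) • 1 := by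
    simp only [add_mul, mul_add, sub_mul, mul_sub, hQ, hQ', transpose_mul, Matrix.smul_mul,
      Matrix.mul_smul, mul_one, one_mul]
    module
  rw [hexpand]
  simp only [trace_add, trace_sub, trace_smul, trace_transpose, trace_one, smul_add, smul_eq_mul]
  ring

end Orthogonal

lemma IsSO.frobSq_sub_one_sq {R : Matrix (Fin 3) (Fin 3) ℝ} (hR : IsSO R) :
    frobSq (R - 1) ^ 2 = 2 * frobSq (R + Rᵀ - (2 : ℝ) • 1) := by
  obtain ⟨hRR, hdet⟩ := hR
  have hRR' : R * Rᵀ = 1 := mul_eq_one_comm.mp hRR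
  have htrace_sq : trace (R * R) = trace R ^ 2 - 2 * trace R := by
    rw [trace_mul_self_fin_three, adjugate_eq_transpose_of_det_eq_one hRR' hdet, trace_transpose]
  have hsymm : (R + Rᵀ - (2 : ℝ) • 1)ᵀ = R + Rᵀ - (2 : ℝ) • 1 := by
    simp only [transpose_sub, transpose_add, transpose_transpose, transpose_smul, transpose_one,
      add_comm]
  rw [frobSq_eq_trace_transpose_mul, frobSq_eq_trace_transpose_mul, hsymm,
    trace_transpose_mul_sub_one hRR, trace_mul_self_add_transpose_sub_two hRR hRR', htrace_sq]
  rw [Fintype.card_fin]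
  ring

theorem stmt0 (R : Matrix (Fin 3) (Fin 3) ℝ) (hR : IsSO R) :
    frobSq (R - 1) =
      Real.sqrt 2 * frob (R + Rᵀ - (2:ℝ) • (1 : Matrix (Fin 3) (Fin 3) ℝ)) := by
  rw [frob, ← Real.sqrt_mul zero_le_two, ← hR.frobSq_sub_one_sq, Real.sqrt_sq (frobSq_nonneg _)]
end

section
/- For any 3×3 real matrix F with det F > 0, the quantity tr((FᵀF − I₃)²) equals the squared Frobenius norm |||FᵀF − I₃|||², and this is greater than or equal to dist(F, SO(3))², where dist(F, SO(3)) = inf over R ∈ SO(3) of |||F − R|||. -/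
open Matrix

open scoped MatrixOrder ComplexOrder

/-!
Polar decomposition: for `det F > 0` write `F = R U` with `R ∈ SO(3)` and `U = √(FᵀF)` positive
semidefinite. Then `|||F - R|||² = |||U - 1|||² = tr (U - 1)²`, and
`(U² - 1)² - (U - 1)² = (U - 1) (U² + 2U) (U - 1)` has nonnegative trace, so
`|||U - 1|||² ≤ |||U² - 1|||² = |||FᵀF - 1|||²`.
-/

namespace Matrix

variable {n : Type*} [Fintype n] [DecidableEq n]

theorem PosSemidef.trace_sub_one_mul_self_le {𝕜 : Type*} [RCLike 𝕜] {U : Matrix n n 𝕜}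
    (hU : U.PosSemidef) :
    ((U - 1) * (U - 1)).trace ≤ ((U * U - 1) * (U * U - 1)).trace := by
  have hsum : (U * U + U + U).PosSemidef := (((sq U).symm ▸ hU.pow 2).add hU).add hU
  have hdiff : (U * U - 1) * (U * U - 1) - (U - 1) * (U - 1)
      = (U - 1)ᴴ * (U * U + U + U) * (U - 1) := by
    rw [conjTranspose_sub, conjTranspose_one, hU.isHermitian.eq]
    noncomm_ring
  have := (hsum.conjTranspose_mul_mul_same (U - 1)).trace_nonneg
  rwa [← hdiff, trace_sub, sub_nonneg] at this

theorem exists_mem_specialOrthogonalGroup_mul_posSemidef {F : Matrix n n ℝ} (hF : 0 < F.det) :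
    ∃ R ∈ specialOrthogonalGroup n ℝ, ∃ U : Matrix n n ℝ,
      U.PosSemidef ∧ U * U = Fᵀ * F ∧ F = R * U := by
  have hC : (Fᵀ * F).PosSemidef := by simpa using posSemidef_conjTranspose_mul_self F
  set U := CFC.sqrt (Fᵀ * F)
  have hU : U.PosSemidef := (CFC.sqrt_nonneg _).posSemidef
  have hUU : U * U = Fᵀ * F := CFC.sqrt_mul_sqrt_self _ hC.nonneg
  have hUT : Uᵀ = U := by simpa using hU.isHermitian.eq
  have hUdet : 0 < U.det := by
    have hsq : U.det * U.det = F.det * F.det := by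
      rw [← det_mul, hUU, det_mul, det_transpose]
    nlinarith [hU.det_nonneg]
  have hUunit : IsUnit U.det := hUdet.ne'.isUnit
  refine ⟨F * U⁻¹, ?_, U, hU, hUU, by rw [nonsing_inv_mul_cancel_right _ _ hUunit]⟩
  have horth : (F * U⁻¹)ᵀ * (F * U⁻¹) = 1 := by
    calc (F * U⁻¹)ᵀ * (F * U⁻¹) = U⁻¹ * (U * U) * U⁻¹ := by
          rw [transpose_mul, transpose_nonsing_inv, hUT, hUU]; simp only [Matrix.mul_assoc]
      _ = 1 := by
          rw [← Matrix.mul_assoc, nonsing_inv_mul _ hUunit, Matrix.one_mul,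
            mul_nonsing_inv _ hUunit]
  have hdet_pos : 0 < (F * U⁻¹).det := by
    rw [det_mul, det_nonsing_inv, Ring.inverse_eq_inv]
    exact mul_pos hF (inv_pos.mpr hUdet)
  have hdet_sq : (F * U⁻¹).det * (F * U⁻¹).det = 1 := by
    simpa only [det_mul, det_transpose, det_one] using congrArg det horth
  have hdet : (F * U⁻¹).det = 1 := by nlinarith
  exact ⟨(mem_orthogonalGroup_iff' n ℝ).mpr horth, hdet⟩

end Matrix

theorem isSO_iff_mem_specialOrthogonalGroup {R : Matrix (Fin 3) (Fin 3) ℝ} :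
    IsSO R ↔ R ∈ specialOrthogonalGroup (Fin 3) ℝ := by
  rw [mem_specialOrthogonalGroup_iff, mem_orthogonalGroup_iff']
  rfl

theorem frobSq_eq_trace (A : Matrix (Fin 3) (Fin 3) ℝ) : frobSq A = (Aᵀ * A).trace := by
  simp only [frobSq, trace, diag, mul_apply, transpose_apply, sq]
  exact Finset.sum_comm

theorem frobSq_eq_trace_mul_self {A : Matrix (Fin 3) (Fin 3) ℝ} (hA : Aᵀ = A) :
    frobSq A = (A * A).trace := by
  rw [frobSq_eq_trace, hA]

theorem frobSq_orthogonal_mul {R : Matrix (Fin 3) (Fin 3) ℝ} (hR : Rᵀ * R = 1)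
    (A : Matrix (Fin 3) (Fin 3) ℝ) : frobSq (R * A) = frobSq A := by
  rw [frobSq_eq_trace, frobSq_eq_trace, transpose_mul, Matrix.mul_assoc, ← Matrix.mul_assoc Rᵀ,
    hR, Matrix.one_mul]

theorem sq_sInf_frob_sub_le (F : Matrix (Fin 3) (Fin 3) ℝ) {R : Matrix (Fin 3) (Fin 3) ℝ}
    (hR : IsSO R) : (sInf ((fun R => frob (F - R)) '' {R | IsSO R})) ^ 2 ≤ frobSq (F - R) := by
  have hnonneg : ∀ d ∈ (fun R => frob (F - R)) '' {R | IsSO R}, 0 ≤ d := by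
    rintro _ ⟨_, -, rfl⟩
    exact Real.sqrt_nonneg _
  calc (sInf ((fun R => frob (F - R)) '' {R | IsSO R})) ^ 2 ≤ frob (F - R) ^ 2 :=
        pow_le_pow_left₀ (Real.sInf_nonneg hnonneg) (csInf_le ⟨0, hnonneg⟩ ⟨R, hR, rfl⟩) 2
    _ = frobSq (F - R) := Real.sq_sqrt (by unfold frobSq; positivity)

theorem stmt1 (F : Matrix (Fin 3) (Fin 3) ℝ) (hF : 0 < F.det) :
    ((Fᵀ * F - 1) * (Fᵀ * F - 1)).trace = frobSq (Fᵀ * F - 1) ∧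
    (sInf ((fun R => frob (F - R)) '' {R | IsSO R}))^2 ≤ frobSq (Fᵀ * F - 1) := by
  have hsymm : (Fᵀ * F - 1)ᵀ = Fᵀ * F - 1 := by
    rw [transpose_sub, transpose_mul, transpose_transpose, transpose_one]
  refine ⟨(frobSq_eq_trace_mul_self hsymm).symm, ?_⟩
  obtain ⟨R, hR, U, hU, hUU, rfl⟩ := exists_mem_specialOrthogonalGroup_mul_posSemidef hF
  have hUsymm : (U - 1)ᵀ = U - 1 := by
    rw [transpose_sub, transpose_one, ← conjTranspose_eq_transpose_of_trivial, hU.isHermitian.eq]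
  calc _ ≤ frobSq (R * U - R) := sq_sInf_frob_sub_le _ (isSO_iff_mem_specialOrthogonalGroup.mpr hR)
    _ = ((U - 1) * (U - 1)).trace := by
        rw [← mul_sub_one, frobSq_orthogonal_mul ((mem_orthogonalGroup_iff' _ ℝ).mp hR.1),
          frobSq_eq_trace_mul_self hUsymm]
    _ ≤ ((U * U - 1) * (U * U - 1)).trace := hU.trace_sub_one_mul_self_le
    _ = frobSq ((R * U)ᵀ * (R * U) - 1) := by rw [hUU, frobSq_eq_trace_mul_self hsymm]
end
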